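/- arXiv:math/0605177 — 4 statements merged into one kernel-verified Lean document; each statement's English description precedes it below -/
import Mathlib

section
/- Let $W$ be a Weyl group with simple reflections indexed by $I$, and let $\delta$ be an automorphism of $W$ permuting the simple reflections. Fix $J \subset I$. If $(J_n, w_n)_{n \geq 0}$ is a sequence with $J_0 = J$, $J_n = J_{n-1} \cap \delta^{-1}(w_{n-1}^{-1} J_{n-1})$ for $n \geq 1$, and $w_n \in {}^{J_n}W^{\delta(J_n)}$ with $w_n \in W_{J_{n-1}} w_{n-1}$ for $n \geq 1$, then the sequences $(J_n)$ and $(w_n)$ are eventually constant: there exists $m$ such that $J_m = J_{m+1} = \cdots$ and $w_m = w_{m+1} = \cdots$. -/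
/-!
Since `Jₙ₊₁ ⊆ Jₙ` and `I` is finite, the `Jₙ` stabilise at some `K`. From then on
`wₙ₊₁ ∈ W_K wₙ` and both have minimal length in this coset, so they coincide: for `w ∈ {}^K W`
and `u ∈ W_K` one has `ℓ(u w) = ℓ(u) + ℓ(w)`, by induction on `u` using the exchange condition.
The exchange condition comes from Tits' sign representation of `W` on `W × {±1}`, which shows
that the parity of the number of occurrences of a reflection in the left inversion sequence of
a word depends only on the product of the word.
-/

open CoxeterSystem

variable {I W : Type*} [Group W] {M : CoxeterMatrix I}

/-- The standard parabolic subgroup `W_J`. -/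
def parab (cs : CoxeterSystem M W) (J : Set I) : Subgroup W :=
  Subgroup.closure (cs.simple '' J)

/-- `w ∈ W^J`: `w` is the minimal length element of the coset `w W_J`. -/
def MinRight (cs : CoxeterSystem M W) (J : Set I) (w : W) : Prop :=
  ∀ u ∈ parab cs J, cs.length w ≤ cs.length (w * u)

/-- `w ∈ {}^J W`: `w` is the minimal length element of the coset `W_J w`. -/
def MinLeft (cs : CoxeterSystem M W) (J : Set I) (w : W) : Prop :=
  ∀ u ∈ parab cs J, cs.length w ≤ cs.length (u * w)

/-- A Bédard sequence in `𝓣(J, δ)`, where the diagram automorphism `δ` of `W`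
corresponds to the permutation `p` of the simple reflections:
`J₀ = J`; `Jₙ = J_{n-1} ∩ δ⁻¹(w_{n-1}⁻¹ J_{n-1})`;
`wₙ ∈ {}^{Jₙ}W^{δ(Jₙ)}`; and `wₙ ∈ W_{J_{n-1}} w_{n-1}` for `n ≥ 1`. -/
def BedardSeq (cs : CoxeterSystem M W) (p : Equiv.Perm I)
    (J : Set I) (Jseq : ℕ → Set I) (wseq : ℕ → W) : Prop :=
  Jseq 0 = J ∧
  (∀ n, Jseq (n + 1) =
    {i | i ∈ Jseq n ∧ ∃ j ∈ Jseq n,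
      (wseq n)⁻¹ * cs.simple j * wseq n = cs.simple (p i)}) ∧
  (∀ n, MinLeft cs (Jseq n) (wseq n) ∧ MinRight cs (p '' Jseq n) (wseq n)) ∧
  (∀ n, wseq (n + 1) * (wseq n)⁻¹ ∈ parab cs (Jseq n))

namespace CoxeterSystem

open scoped Classical

variable (cs : CoxeterSystem M W)

local prefix:100 "s" => cs.simple
local prefix:100 "π" => cs.wordProd
local prefix:100 "ℓ" => cs.length
local prefix:100 "lis" => cs.leftInvSeq

theorem simple_mul_mul_simple_eq_self_iff (i : I) (t : W) :
    s i * t * s i = s i ↔ t = s i := by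
  constructor
  · intro h
    simpa [mul_assoc, cs.simple_mul_simple_cancel_left] using congrArg (s i * · * s i) h
  · rintro rfl
    rw [cs.simple_mul_simple_self, one_mul]

noncomputable def signedConj (i : I) : Equiv.Perm (W × ℤˣ) :=
  Function.Involutive.toPerm (fun x => (s i * x.1 * s i, x.2 * if x.1 = s i then -1 else 1))
    (by
      rintro ⟨t, ε⟩
      simp only [cs.simple_mul_mul_simple_eq_self_iff, Prod.mk.injEq]
      refine ⟨by simp [mul_assoc, cs.simple_mul_simple_cancel_left], ?_⟩
      split_ifs <;> simp)

theorem signedConj_apply (i : I) (t : W) (ε : ℤˣ) :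
    cs.signedConj i (t, ε) = (s i * t * s i, ε * if t = s i then -1 else 1) := rfl

theorem simple_mul_pow_eq_inv_mul_simple (i j : I) (k : ℕ) :
    s j * (s i * s j) ^ k = ((s i * s j) ^ k)⁻¹ * s j := by
  have hc : s j * (s i * s j) * (s j)⁻¹ = (s i * s j)⁻¹ := by
    rw [mul_inv_rev, cs.inv_simple, cs.inv_simple, mul_assoc, cs.simple_mul_simple_cancel_right]
  rw [← inv_pow, ← hc, conj_pow, cs.inv_simple, cs.simple_mul_simple_cancel_right]

theorem pow_mul_mul_inv_pow_eq_simple_iff (i j : I) (a k : ℕ) (t : W) :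
    (s i * s j) ^ a * t * ((s i * s j) ^ k)⁻¹ = s j ↔ (s i * s j) ^ (k + a) * t = s j := by
  rw [mul_inv_eq_iff_eq_mul, cs.simple_mul_pow_eq_inv_mul_simple,
    eq_inv_mul_iff_mul_eq, ← mul_assoc, ← pow_add]

theorem simple_mul_mul_simple_eq_simple_iff (i j : I) (x : W) :
    s j * x * s j = s i ↔ s i * s j * x = s j := by
  calc s j * x * s j = s i ↔ s i * (s j * x * s j) = s i * s i := (mul_right_inj _).symm
    _ ↔ s i * s j * x * s j = 1 := by simp only [cs.simple_mul_simple_self, mul_assoc]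
    _ ↔ s i * s j * x = s j := by rw [mul_eq_one_iff_eq_inv, cs.inv_simple]

theorem signedConj_mul_pow_apply (i j : I) (k : ℕ) (t : W) (ε : ℤˣ) :
    ((cs.signedConj i * cs.signedConj j) ^ k) (t, ε) =
      ((s i * s j) ^ k * t * ((s i * s j) ^ k)⁻¹,
        ε * ∏ r ∈ Finset.range (2 * k), if (s i * s j) ^ r * t = s j then -1 else 1) := by
  induction k with
  | zero => simp
  | succ k ih =>
    have h₀ := cs.pow_mul_mul_inv_pow_eq_simple_iff i j k k t
    have h₁ : s i * s j * ((s i * s j) ^ k * t * ((s i * s j) ^ k)⁻¹) = s j ↔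
        (s i * s j) ^ (k + (k + 1)) * t = s j := by
      rw [← cs.pow_mul_mul_inv_pow_eq_simple_iff i j (k + 1) k, pow_succ']
      simp only [mul_assoc]
    rw [pow_succ', Equiv.Perm.mul_apply, ih, Equiv.Perm.mul_apply, signedConj_apply,
      signedConj_apply, Prod.mk.injEq, cs.simple_mul_mul_simple_eq_simple_iff, h₀, h₁,
      show 2 * (k + 1) = 2 * k + 1 + 1 by ring, Finset.prod_range_succ, Finset.prod_range_succ]
    refine ⟨by rw [pow_succ', mul_inv_rev, mul_inv_rev, cs.inv_simple, cs.inv_simple]; group, ?_⟩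
    simp only [mul_assoc, two_mul, show k + (k + 1) = k + k + 1 by ring]

theorem isLiftable_signedConj : M.IsLiftable cs.signedConj := by
  intro i j
  ext ⟨t, ε⟩ : 1
  have hc : (s i * s j) ^ M i j = 1 := cs.simple_mul_simple_pow i j
  have hperiodic : ∀ r, (s i * s j) ^ (M i j + r) * t = (s i * s j) ^ r * t := fun r => by
    rw [pow_add, hc, one_mul]
  -- the `2m` signs are the same `m` signs twice over, since `(s i * s j) ^ m = 1`
  rw [signedConj_mul_pow_apply, Equiv.Perm.one_apply, hc, two_mul, Finset.prod_range_add]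
  simp only [hperiodic, Int.units_mul_self, inv_one, mul_one, one_mul]

/-- Tits' sign representation. -/
noncomputable def signRep : W →* Equiv.Perm (W × ℤˣ) :=
  cs.lift ⟨cs.signedConj, cs.isLiftable_signedConj⟩

theorem count_leftInvSeq_cons (i : I) (ω : List I) (t : W) :
    (lis (i :: ω)).count t = (lis ω).count (s i * t * s i) + if t = s i then 1 else 0 := by
  have hconj : t = MulAut.conj (s i) (s i * t * s i) := by
    simp [cs.inv_simple, mul_assoc, cs.simple_mul_simple_cancel_left]
  rw [leftInvSeq, List.count_cons]
  nth_rw 1 [hconj]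
  rw [List.count_map_of_injective _ _ (MulAut.conj (s i)).injective]
  simp only [beq_iff_eq, @eq_comm _ (s i) t]

theorem signRep_inv_wordProd_apply (ω : List I) (t : W) (ε : ℤˣ) :
    cs.signRep (π ω)⁻¹ (t, ε) = ((π ω)⁻¹ * t * π ω, ε * (-1) ^ (lis ω).count t) := by
  induction ω generalizing t ε with
  | nil => simp
  | cons i ω ih =>
    rw [cs.wordProd_cons, mul_inv_rev, cs.inv_simple, map_mul, Equiv.Perm.mul_apply, signRep,
      cs.lift_apply_simple, signedConj_apply, ← signRep, ih, count_leftInvSeq_cons, pow_add]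
    split_ifs <;> simp [mul_assoc]

theorem neg_one_pow_count_leftInvSeq_eq {ω ω' : List I} (h : π ω = π ω') (t : W) :
    (-1 : ℤˣ) ^ (lis ω).count t = (-1) ^ (lis ω').count t := by
  have := congrArg Prod.snd (cs.signRep_inv_wordProd_apply ω t 1)
  rw [h, cs.signRep_inv_wordProd_apply] at this
  simpa using this.symm

theorem simple_mem_leftInvSeq_of_isLeftDescent {ω : List I} {i : I}
    (hi : cs.IsLeftDescent (π ω) i) : s i ∈ lis ω := by
  obtain ⟨ρ, hρ, hρω⟩ := cs.exists_isReduced (s i * π ω)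
  have hword : π (i :: ρ) = π ω := by
    rw [cs.wordProd_cons, ← hρω, cs.simple_mul_simple_cancel_left]
  have hρ_not_mem : s i ∉ lis ρ := fun hmem => by
    have hinv := (cs.isLeftInversion_of_mem_leftInvSeq hρ hmem).2
    rw [← hρω, cs.simple_mul_simple_cancel_left] at hinv
    exact lt_asymm hi hinv
  have hcount : (lis (i :: ρ)).count (s i) = 1 := by
    rw [count_leftInvSeq_cons, cs.simple_mul_simple_self, one_mul,
      List.count_eq_zero_of_not_mem hρ_not_mem, if_pos rfl]
  have hparity := cs.neg_one_pow_count_leftInvSeq_eq hword (s i)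
  by_contra hmem
  rw [hcount, List.count_eq_zero_of_not_mem hmem] at hparity
  exact absurd hparity (by decide)

/-- The exchange condition. -/
theorem exists_eraseIdx_of_isLeftDescent {ω : List I} {i : I}
    (hi : cs.IsLeftDescent (π ω) i) : ∃ j < ω.length, s i * π ω = π (ω.eraseIdx j) := by
  obtain ⟨j, hj, hget⟩ := List.mem_iff_getElem.mp (cs.simple_mem_leftInvSeq_of_isLeftDescent hi)
  rw [length_leftInvSeq] at hj
  refine ⟨j, hj, ?_⟩
  rw [← getD_leftInvSeq_mul_wordProd, List.getD_eq_getElem _ _ (by simpa using hj), hget]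

theorem isLeftDescent_or_exists_of_isLeftDescent_mul {u w : W} {i : I}
    (h : cs.IsLeftDescent (u * w) i) :
    cs.IsLeftDescent u i ∨ ∃ v, ℓ v < ℓ w ∧ s i * (u * w) = u * v := by
  obtain ⟨ω, hω, rfl⟩ := cs.exists_isReduced u
  obtain ⟨ρ, hρ, rfl⟩ := cs.exists_isReduced w
  rw [← wordProd_append] at h
  obtain ⟨j, hj, hexch⟩ := cs.exists_eraseIdx_of_isLeftDescent h
  rw [wordProd_append] at hexch
  rcases lt_or_ge j ω.length with hjω | hjρ
  · left
    rw [List.eraseIdx_append_of_lt_length hjω, wordProd_append, ← mul_assoc,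
      mul_left_inj] at hexch
    calc ℓ (s i * π ω) ≤ (ω.eraseIdx j).length := hexch ▸ cs.length_wordProd_le _
      _ < ℓ (π ω) := by rw [List.length_eraseIdx_of_lt hjω, hω.eq]; omega
  · right
    rw [List.eraseIdx_append_of_length_le hjρ, wordProd_append] at hexch
    refine ⟨_, ?_, hexch⟩
    rw [List.length_append] at hj
    calc ℓ (π (ρ.eraseIdx (j - ω.length))) ≤ (ρ.eraseIdx (j - ω.length)).length :=
          cs.length_wordProd_le _
      _ < ℓ (π ρ) := by rw [List.length_eraseIdx_of_lt (by omega), hρ.eq]; omega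

end CoxeterSystem

namespace MinLeft

variable {cs : CoxeterSystem M W} {K : Set I}

local prefix:100 "s" => cs.simple
local prefix:100 "ℓ" => cs.length

theorem length_mul_eq_add {w u : W} (hw : MinLeft cs K w) (hu : u ∈ parab cs K) :
    ℓ (u * w) = ℓ u + ℓ w := by
  have step : ∀ i ∈ K, ∀ u ∈ parab cs K, ℓ (u * w) = ℓ u + ℓ w →
      ℓ (s i * u * w) = ℓ (s i * u) + ℓ w := by
    intro i hi u hu ih
    refine le_antisymm (cs.length_mul_le _ _) ?_
    have hsu : ℓ (s i * u) ≤ ℓ u + 1 :=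
      (cs.length_mul_le _ _).trans (by rw [cs.length_simple, add_comm])
    rw [mul_assoc]
    rcases cs.length_simple_mul (u * w) i with hup | hdown
    · omega
    have hdesc : cs.IsLeftDescent (u * w) i := by unfold IsLeftDescent; omega
    rcases cs.isLeftDescent_or_exists_of_isLeftDescent_mul hdesc with hdesc_u | ⟨v, hv, hexch⟩
    · unfold IsLeftDescent at hdesc_u
      omega
    · have hconj : u⁻¹ * s i * u ∈ parab cs K :=
        mul_mem (mul_mem (inv_mem hu) (Subgroup.subset_closure ⟨i, hi, rfl⟩)) hu
      have hmin := hw _ hconj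
      rw [mul_assoc, mul_assoc, hexch, inv_mul_cancel_left] at hmin
      omega
  induction hu using Subgroup.closure_induction_left with
  | one => simp
  | mul_left x hx y hy ih =>
    obtain ⟨i, hi, rfl⟩ := hx
    exact step i hi y hy ih
  | inv_mul_cancel x hx y hy ih =>
    obtain ⟨i, hi, rfl⟩ := hx
    rw [cs.inv_simple]
    exact step i hi y hy ih

theorem eq_of_mul_inv_mem {v w : W} (hv : MinLeft cs K v) (hw : MinLeft cs K w)
    (h : v * w⁻¹ ∈ parab cs K) : v = w := by
  have hadd := hw.length_mul_eq_add h
  have hle := hv _ (inv_mem h)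
  rw [inv_mul_cancel_right] at hadd
  rw [mul_inv_rev, inv_inv, inv_mul_cancel_right] at hle
  have hlen : ℓ (v * w⁻¹) = 0 := by omega
  rwa [cs.length_eq_zero_iff, mul_inv_eq_one] at hlen

end MinLeft

namespace BedardSeq

variable {cs : CoxeterSystem M W} {p : Equiv.Perm I} {J : Set I} {Jseq : ℕ → Set I}
  {wseq : ℕ → W}

theorem antitone (h : BedardSeq cs p J Jseq wseq) : Antitone Jseq :=
  antitone_nat_of_succ_le fun n => by
    rw [h.2.1 n]
    exact Set.sep_subset _ _

theorem wseq_succ_eq (h : BedardSeq cs p J Jseq wseq) {n : ℕ} (hJ : Jseq (n + 1) = Jseq n) :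
    wseq (n + 1) = wseq n :=
  MinLeft.eq_of_mul_inv_mem (hJ ▸ (h.2.2.1 (n + 1)).1) (h.2.2.1 n).1 (h.2.2.2 n)

end BedardSeq

theorem bedard_seq_eventually_constant_general [Finite I]
    (cs : CoxeterSystem M W) (p : Equiv.Perm I)
    (J : Set I) (Jseq : ℕ → Set I) (wseq : ℕ → W)
    (h : BedardSeq cs p J Jseq wseq) :
    ∃ m : ℕ, ∀ n, m ≤ n → Jseq n = Jseq m ∧ wseq n = wseq m := by
  obtain ⟨m, hm⟩ := WellFoundedLT.antitone_chain_condition h.antitone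
  refine ⟨m, fun n hmn => ⟨(hm n hmn).symm, ?_⟩⟩
  induction n, hmn using Nat.le_induction with
  | base => rfl
  | succ n hmn ih => rw [h.wseq_succ_eq (by rw [← hm n hmn, ← hm (n + 1) (by omega)]), ih]

theorem bedard_seq_eventually_constant [Finite I]
    (cs : CoxeterSystem M W) (p : Equiv.Perm I) (δ : MulAut W)
    (hδ : ∀ i, δ (cs.simple i) = cs.simple (p i))
    (J : Set I) (Jseq : ℕ → Set I) (wseq : ℕ → W)
    (h : BedardSeq cs p J Jseq wseq) :
    ∃ m : ℕ, ∀ n, m ≤ n → Jseq n = Jseq m ∧ wseq n = wseq m :=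
  bedard_seq_eventually_constant_general cs p J Jseq wseq h
end

section
/- With notation as in the construction of $(K_n, v_n)$ from $(J_n, w_n) \in \mathcal{T}(J,\delta)$: for every $n \geq 0$, $K_n = (\delta^n(v_0)\delta^{n-1}(v_1)\cdots\delta(v_{n-1}))^{-1} \delta^{n+1}(J_n)$. -/
/-!
Put `Φₙ(x) = Aₙ⁻¹ δⁿ⁺¹(x) Aₙ`, an automorphism of `W`; the claim is that `Kₙ` consists of the
`i` with `sᵢ = Φₙ(sⱼ)` for some `j ∈ Jₙ`. The formula for `vₙ` gives `Aₙ₊₁ = δⁿ⁺¹(wₙ)⁻¹ Aₙ`, hence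
`Φₙ₊₁(x) = Φₙ(wₙ δ(x) wₙ⁻¹)` and `δ(vₙ⁻¹ Φₙ(y) vₙ) = Φₙ₊₁(y)`. Through these two identities the
condition cutting `Kₙ₊₁` out of `Kₙ = Φₙ(Jₙ)` becomes the one cutting `Jₙ₊₁` out of `Jₙ`, so the
formula follows by induction, carrying along that `Φₙ` sends the simple reflections indexed by
`Jₙ` to simple reflections. The base case `K₀ = δ(J)` needs that `i ↦ sᵢ` is injective, which is
seen on the geometric representation of `W`.
-/

open CoxeterSystem

variable {I W : Type*} [Group W] {M : CoxeterMatrix I}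

namespace CoxeterMatrix

variable (M)

/-- For `M a b = 0` (no relation) Lean's `π / 0 = 0` gives the usual value `-1`. -/
noncomputable def cosEntry (a b : I) : ℝ := -Real.cos (Real.pi / M a b)

lemma cosEntry_self (a : I) : M.cosEntry a a = 1 := by simp [cosEntry]

lemma cosEntry_comm (a b : I) : M.cosEntry b a = M.cosEntry a b := by
  rw [cosEntry, cosEntry, M.symmetric]

noncomputable def geomForm (a : I) : (I →₀ ℝ) →ₗ[ℝ] ℝ :=
  Finsupp.linearCombination ℝ (M.cosEntry a)

lemma geomForm_single (a b : I) (r : ℝ) :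
    M.geomForm a (Finsupp.single b r) = r * M.cosEntry a b := by
  simp [geomForm]

noncomputable def geomReflection (a : I) (v : I →₀ ℝ) : I →₀ ℝ :=
  v - (2 * M.geomForm a v) • Finsupp.single a 1

lemma geomReflection_involutive (a : I) : Function.Involutive (M.geomReflection a) := by
  intro v
  simp only [geomReflection, map_sub, map_smul, geomForm_single, smul_eq_mul, cosEntry_self]
  module

lemma geomReflection_geomReflection (a b : I) (v : I →₀ ℝ) (x y : ℝ) :
    M.geomReflection a (M.geomReflection b
        (v + x • Finsupp.single a 1 + y • Finsupp.single b 1)) =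
      v + ((4 * M.cosEntry a b ^ 2 - 1) * x + 2 * M.cosEntry a b * y
            - 2 * M.geomForm a v + 4 * M.cosEntry a b * M.geomForm b v) • Finsupp.single a 1
        + (-y - 2 * M.cosEntry a b * x - 2 * M.geomForm b v) • Finsupp.single b 1 := by
  simp only [geomReflection, map_add, map_sub, map_smul, geomForm_single, smul_eq_mul,
    cosEntry_self, cosEntry_comm]
  module

open Real in
/-- `geomReflection a ∘ geomReflection b` is a rotation by `2θ` of the plane spanned by `a`, `b`. -/
lemma iterate_geomReflection_comp (a b : I) (θ : ℝ) (hs : sin θ ≠ 0)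
    (hc : M.cosEntry a b = -cos θ) (v : I →₀ ℝ) (j : ℕ) :
    (M.geomReflection a ∘ M.geomReflection b)^[j] v =
      v + ((-(M.geomForm b v * sin θ) * sin (2 * j * θ)
            + (M.geomForm a v - M.cosEntry a b * M.geomForm b v) * (cos (2 * j * θ) - 1))
            / sin θ ^ 2) • Finsupp.single a 1
        + ((M.geomForm a v * sin θ * sin (2 * j * θ)
            + (M.geomForm b v - M.cosEntry a b * M.geomForm a v) * (cos (2 * j * θ) - 1))
            / sin θ ^ 2) • Finsupp.single b 1 := by
  induction j with
  | zero => simp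
  | succ j ih =>
    rw [Function.iterate_succ_apply', ih, Function.comp_apply, geomReflection_geomReflection,
      show 2 * ((j + 1 : ℕ) : ℝ) * θ = 2 * j * θ + 2 * θ by push_cast; ring,
      sin_add, cos_add, sin_two_mul, cos_two_mul, hc]
    have hpyth := sin_sq_add_cos_sq θ
    congr 3
    · field_simp
      linear_combination (2 * cos θ * M.geomForm b v * cos (2 * j * θ)
        - 4 * cos θ * M.geomForm b v - 2 * M.geomForm a v) * hpyth
    · field_simp
      linear_combination (-2 * cos θ * M.geomForm a v * cos (2 * j * θ)
        - 2 * M.geomForm b v) * hpyth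

open Real in
lemma iterate_geomReflection_comp_coxeter (a b : I) (hm : 2 ≤ M a b) (v : I →₀ ℝ) :
    (M.geomReflection a ∘ M.geomReflection b)^[M a b] v = v := by
  have hm0 : (0 : ℝ) < M a b := by exact_mod_cast (by omega : 0 < M a b)
  have hsin : sin (π / M a b) ≠ 0 := by
    refine (sin_pos_of_pos_of_lt_pi (div_pos pi_pos hm0) (div_lt_self pi_pos ?_)).ne'
    exact_mod_cast (by omega : 1 < M a b)
  rw [M.iterate_geomReflection_comp a b _ hsin rfl,
    show 2 * (M a b : ℝ) * (π / M a b) = 2 * π by field_simp]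
  simp

lemma isLiftable_geomReflection :
    M.IsLiftable fun a => (M.geomReflection_involutive a).toPerm := by
  intro a b
  rcases eq_or_ne a b with rfl | hab
  · rw [M.diagonal, pow_one]
    ext v : 1
    exact M.geomReflection_involutive a v
  rcases Nat.lt_or_ge (M a b) 2 with hm | hm
  · rw [show M a b = 0 by have := M.off_diagonal a b hab; omega, pow_zero]
  · ext v : 1
    rw [Equiv.Perm.coe_pow, Equiv.Perm.coe_mul]
    exact M.iterate_geomReflection_comp_coxeter a b hm v

end CoxeterMatrix

theorem CoxeterSystem.simple_injective (cs : CoxeterSystem M W) : Function.Injective cs.simple := by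
  intro i j hij
  by_contra hne
  have hrefl : M.geomReflection i = M.geomReflection j := by
    have := congrArg (⇑(cs.lift ⟨_, M.isLiftable_geomReflection⟩)) hij
    simp only [lift_apply_simple] at this
    exact congrArg DFunLike.coe this
  have := congrArg (fun v => v j) (congrFun hrefl (Finsupp.single j 1))
  norm_num [CoxeterMatrix.geomReflection, CoxeterMatrix.geomForm_single,
    CoxeterMatrix.cosEntry_self, hne] at this

def simpleImage (cs : CoxeterSystem M W) (φ : W → W) (S : Set I) : Set I :=
  {i | ∃ j ∈ S, cs.simple i = φ (cs.simple j)}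

section TwistedRecursion

variable (cs : CoxeterSystem M W) {p : Equiv.Perm I} {δ : MulAut W}

lemma pow_apply_simple (hδ : ∀ i, δ (cs.simple i) = cs.simple (p i)) (k : ℕ) (i : I) :
    (δ ^ k) (cs.simple i) = cs.simple ((p ^ k) i) := by
  induction k with
  | zero => rfl
  | succ k ih => rw [pow_succ', MulAut.mul_apply, ih, hδ, pow_succ', Equiv.Perm.mul_apply]

lemma apply_eq_simple_iff (hδ : ∀ i, δ (cs.simple i) = cs.simple (p i)) (x : W) (i : I) :
    δ x = cs.simple i ↔ x = cs.simple (p.symm i) := by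
  conv_lhs => rw [← p.apply_symm_apply i, ← hδ]
  exact δ.injective.eq_iff

lemma simpleImage_eq_image (hδ : ∀ i, δ (cs.simple i) = cs.simple (p i)) (J : Set I) :
    simpleImage cs δ J = p '' J := by
  ext i
  simp only [simpleImage, hδ, (simple_injective cs).eq_iff, Set.mem_image]
  exact exists_congr fun j => and_congr_right' eq_comm

variable {Φ Φ' : MulAut W} {w v : W}

lemma twist_simple_eq_iff (hδ : ∀ i, δ (cs.simple i) = cs.simple (p i))
    (hΦ : ∀ x, Φ' x = Φ (w * δ x * w⁻¹)) (k m : I) :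
    Φ' (cs.simple m) = Φ (cs.simple k) ↔ w⁻¹ * cs.simple k * w = cs.simple (p m) := by
  rw [hΦ, hδ, Φ.injective.eq_iff]
  constructor <;> intro h <;> rw [← h] <;> group

lemma simpleImage_twist (hδ : ∀ i, δ (cs.simple i) = cs.simple (p i))
    (hΦ : ∀ x, Φ' x = Φ (w * δ x * w⁻¹)) (hv : ∀ y, δ (v⁻¹ * Φ y * v) = Φ' y)
    {J : Set I} (hJ : ∀ j ∈ J, ∃ i, cs.simple i = Φ (cs.simple j)) :
    {i | i ∈ simpleImage cs Φ J ∧ ∃ j ∈ simpleImage cs Φ J,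
        v⁻¹ * cs.simple j * v = cs.simple (p.symm i)} =
      simpleImage cs Φ' {i | i ∈ J ∧ ∃ j ∈ J, w⁻¹ * cs.simple j * w = cs.simple (p i)} := by
  ext i
  constructor
  · rintro ⟨⟨k, hk, hik⟩, j, ⟨m, hm, hjm⟩, hji⟩
    rw [← apply_eq_simple_iff cs hδ, hjm, hv] at hji
    exact ⟨m, ⟨hm, k, hk, (twist_simple_eq_iff cs hδ hΦ k m).1 (hji.trans hik)⟩, hji.symm⟩
  · rintro ⟨m, ⟨hm, k, hk, hkm⟩, him⟩
    obtain ⟨j, hjm⟩ := hJ m hm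
    refine ⟨⟨k, hk, him.trans ((twist_simple_eq_iff cs hδ hΦ k m).2 hkm)⟩, j, ⟨m, hm, hjm⟩, ?_⟩
    rw [← apply_eq_simple_iff cs hδ, hjm, hv, him]

lemma exists_simple_twist (hδ : ∀ i, δ (cs.simple i) = cs.simple (p i))
    (hΦ : ∀ x, Φ' x = Φ (w * δ x * w⁻¹)) {J : Set I}
    (hJ : ∀ j ∈ J, ∃ i, cs.simple i = Φ (cs.simple j)) :
    ∀ m ∈ {i | i ∈ J ∧ ∃ j ∈ J, w⁻¹ * cs.simple j * w = cs.simple (p i)},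
      ∃ i, cs.simple i = Φ' (cs.simple m) := by
  rintro m ⟨-, k, hk, hkm⟩
  rw [(twist_simple_eq_iff cs hδ hΦ k m).2 hkm]
  exact hJ k hk

lemma eq_simpleImage_of_twisted_recursion (hδ : ∀ i, δ (cs.simple i) = cs.simple (p i))
    {Jseq Kseq : ℕ → Set I} {wseq vseq : ℕ → W} (Φ : ℕ → MulAut W)
    (hΦ : ∀ n x, Φ (n + 1) x = Φ n (wseq n * δ x * (wseq n)⁻¹))
    (hv : ∀ n y, δ ((vseq n)⁻¹ * Φ n y * vseq n) = Φ (n + 1) y)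
    (hJ : ∀ n, Jseq (n + 1) =
      {i | i ∈ Jseq n ∧ ∃ j ∈ Jseq n, (wseq n)⁻¹ * cs.simple j * wseq n = cs.simple (p i)})
    (hK : ∀ n, Kseq (n + 1) =
      {i | i ∈ Kseq n ∧ ∃ j ∈ Kseq n, (vseq n)⁻¹ * cs.simple j * vseq n = cs.simple (p.symm i)})
    (hK0 : Kseq 0 = simpleImage cs (Φ 0) (Jseq 0))
    (hJ0 : ∀ j ∈ Jseq 0, ∃ i, cs.simple i = Φ 0 (cs.simple j)) (n : ℕ) :
    Kseq n = simpleImage cs (Φ n) (Jseq n) := by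
  suffices h : Kseq n = simpleImage cs (Φ n) (Jseq n) ∧
      ∀ j ∈ Jseq n, ∃ i, cs.simple i = Φ n (cs.simple j) from h.1
  induction n with
  | zero => exact ⟨hK0, hJ0⟩
  | succ n ih =>
    obtain ⟨ihK, ihJ⟩ := ih
    rw [hK, hJ, ihK]
    exact ⟨simpleImage_twist cs hδ (hΦ n) (hv n) ihJ, exists_simple_twist cs hδ (hΦ n) ihJ⟩

end TwistedRecursion

theorem associated_seq_Kn_formula
    (cs : CoxeterSystem M W) (p : Equiv.Perm I) (δ : MulAut W)
    (hδ : ∀ i, δ (cs.simple i) = cs.simple (p i))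
    (J : Set I) (Jseq : ℕ → Set I) (wseq : ℕ → W)
    (hJw : BedardSeq cs p J Jseq wseq)
    (Kseq : ℕ → Set I) (vseq : ℕ → W)
    -- the auxiliary products `A n = δⁿ(v₀) δ^{n-1}(v₁) ⋯ δ(v_{n-1})`
    (A : ℕ → W) (hA0 : A 0 = 1) (hA : ∀ n, A (n + 1) = δ (A n * vseq n))
    -- `v_n = (δⁿ(v₀) ⋯ δ(v_{n-1}))⁻¹ δⁿ(w_n⁻¹) (δ^{n-1}(v₀) ⋯ v_{n-1})`
    (hv : ∀ n, vseq n = (A n)⁻¹ * ((δ ^ n) (wseq n))⁻¹ * δ⁻¹ (A n))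
    -- `K₀ = δ(J)` and `K_n = K_{n-1} ∩ δ(v_{n-1}⁻¹ K_{n-1})`
    (hK0 : Kseq 0 = p '' J)
    (hK : ∀ n, Kseq (n + 1) =
      {i | i ∈ Kseq n ∧ ∃ j ∈ Kseq n,
        (vseq n)⁻¹ * cs.simple j * vseq n = cs.simple (p.symm i)}) :
    ∀ n, Kseq n = {i | ∃ j ∈ Jseq n,
      cs.simple i = (A n)⁻¹ * cs.simple ((p ^ (n + 1)) j) * A n} := by
  obtain ⟨hJ0, hJ, -, -⟩ := hJw
  let Φ : ℕ → MulAut W := fun n => MulAut.conj (A n)⁻¹ * δ ^ (n + 1)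
  have hΦ : ∀ n x, Φ n x = (A n)⁻¹ * (δ ^ (n + 1)) x * A n := fun n x => by simp [Φ]
  have hA_succ : ∀ n, A (n + 1) = ((δ ^ (n + 1)) (wseq n))⁻¹ * A n := by
    intro n
    rw [hA, hv, ← mul_assoc, mul_inv_cancel_left, map_mul, map_inv, pow_succ',
      MulAut.mul_apply, MulAut.apply_inv_self]
  have hΦ_succ : ∀ n x, Φ (n + 1) x = Φ n (wseq n * δ x * (wseq n)⁻¹) := by
    intro n x
    simp only [hΦ, hA_succ, map_mul, map_inv, pow_succ δ (n + 1), MulAut.mul_apply]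
    group
  have hv_conj : ∀ n y, δ ((vseq n)⁻¹ * Φ n y * vseq n) = Φ (n + 1) y := by
    intro n y
    simp only [hΦ, hA n, map_mul, map_inv, pow_succ' δ (n + 1), MulAut.mul_apply]
    group
  have hΦ0 : Φ 0 = δ := by
    ext x
    simp [hΦ, hA0]
  have hK0' : Kseq 0 = simpleImage cs (Φ 0) (Jseq 0) := by
    rw [hΦ0, simpleImage_eq_image cs hδ, hK0, hJ0]
  have hJ0' : ∀ j ∈ Jseq 0, ∃ i, cs.simple i = Φ 0 (cs.simple j) :=
    fun j _ => ⟨p j, by rw [hΦ0, hδ]⟩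
  intro n
  rw [eq_simpleImage_of_twisted_recursion cs hδ Φ hΦ_succ hv_conj hJ hK hK0' hJ0' n]
  ext i
  simp only [simpleImage, hΦ, pow_apply_simple cs hδ]
end

section
/- Let $W$ be a Weyl group acting on the root lattice, $J \subset I$, $w \in W^{\delta(J)}$ for a diagram automorphism $\delta$, and $K = I(J,w,\delta)$. If $\alpha$ is a root such that $(w\delta)^n\alpha \in \Phi_J^+$ for all $n \geq 0$, then $\alpha \in \Phi_K^+$. -/
/-!
Statement 8: if `α` is a root with `(wδ)ⁿ α ∈ Φ_J⁺` for all `n ≥ 0`, where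
`w ∈ W^{δ(J)}` and `K = I(J,w,δ)`, then `α ∈ Φ_K⁺`.  (Since the Weyl group is
finite, `wδ` has finite order on the root lattice.)

The root lattice of the Weyl group is modelled as `I →₀ ℤ`, with the simple
root `α_i = single i 1`, and the action of `W` on the root lattice is a
homomorphism `ρ : W →* AddAut (I →₀ ℤ)` satisfying the standard length
criterion: `ℓ(w sᵢ) = ℓ(w) + 1` iff `w(αᵢ) > 0`.
-/

open CoxeterSystem

variable {I W : Type*} [Group W] {M : CoxeterMatrix I}

/-- The multiplicative group structure that `AddAut` carried in the older Mathlib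
(composition, `g * h = h.trans g`); it is now an additive group. -/
instance addAutGroupOfOldMathlib (A : Type*) [Add A] : Group (AddAut A) where
  mul g h := AddEquiv.trans h g
  one := AddEquiv.refl _
  inv := AddEquiv.symm
  mul_assoc _ _ _ := rfl
  one_mul _ := rfl
  mul_one _ := rfl
  inv_mul_cancel := AddEquiv.self_trans_symm

/-- Positivity in the root lattice. -/
def IsPosV {I : Type*} (x : I →₀ ℤ) : Prop := x ≠ 0 ∧ ∀ i, 0 ≤ x i

/-- The set of roots: the orbit of the simple roots under `W`. -/
def Phi (ρ : W →* AddAut (I →₀ ℤ)) : Set (I →₀ ℤ) :=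
  {x | ∃ (w : W) (i : I), x = ρ w (Finsupp.single i 1)}

/-- `Φ_J`: the roots lying in the span of the simple roots indexed by `J`. -/
def PhiJ (ρ : W →* AddAut (I →₀ ℤ)) (J : Set I) : Set (I →₀ ℤ) :=
  {x ∈ Phi ρ | ∀ i, x i ≠ 0 → i ∈ J}

/-- `Φ_J⁺ = Φ_J ∩ Φ⁺`. -/
def PhiJPos (ρ : W →* AddAut (I →₀ ℤ)) (J : Set I) : Set (I →₀ ℤ) :=
  {x ∈ PhiJ ρ J | IsPosV x}

/-- The action of a diagram automorphism (given by the permutation `p` of `I`)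
on the root lattice. -/
def dmap (p : Equiv.Perm I) : (I →₀ ℤ) → (I →₀ ℤ) :=
  Finsupp.equivMapDomain p

/-- `K ⊆ J` satisfies `w δ(K) = K`: `w` maps `{α_{δ(k)} : k ∈ K}` bijectively
to `{α_k : k ∈ K}`. -/
def IsStabR (ρ : W →* AddAut (I →₀ ℤ)) (p : Equiv.Perm I)
    (J : Set I) (w : W) (K : Set I) : Prop :=
  K ⊆ J ∧ ∀ k ∈ K, ∃ k' ∈ K, ρ w (Finsupp.single (p k) 1) = Finsupp.single k' 1

/-- `I(J, w, δ)`: the union of all `K ⊆ J` with `w δ(K) = K`. -/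
def IsetR (ρ : W →* AddAut (I →₀ ℤ)) (p : Equiv.Perm I)
    (J : Set I) (w : W) : Set I :=
  {i | ∃ K, IsStabR ρ p J w K ∧ i ∈ K}

/-!
Let `T = wδ` and average the orbit of `α`: since `Φ` is finite and `T` is injective, `α` is
`T`-periodic, and `β = ∑_{n < m} Tⁿ α` is a `T`-fixed nonnegative vector whose support `K`
contains that of `α` and lies in `J`. Minimality of `w` makes every `T αₖ = w α_{δ(k)}`, `k ∈ K`,
a positive root, so comparing heights in `β = ∑ₖ βₖ T αₖ` forces each `T αₖ` to have height one,
i.e. to be a simple root `α_{k'}`, and `k' ∈ K` because `β_{k'} ≥ βₖ > 0`. Hence `wδ(K) = K`.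
-/

open Finset Finsupp Function

section Lattice

lemma card_support_le_degree {x : I →₀ ℤ} (hx : ∀ i, 0 ≤ x i) : (#x.support : ℤ) ≤ x.degree := by
  rw [degree_apply, card_eq_sum_ones, Nat.cast_sum]
  refine sum_le_sum fun i hi => ?_
  have := hx i
  have := mem_support_iff.1 hi
  push_cast
  omega

lemma IsPosV.one_le_degree {x : I →₀ ℤ} (hx : IsPosV x) : 1 ≤ x.degree := by
  have hne : x.support.Nonempty := Finsupp.support_nonempty_iff.2 hx.1
  have := card_support_le_degree hx.2
  have := hne.card_pos
  omega

lemma exists_eq_single_of_nonneg_of_degree_eq_one {x : I →₀ ℤ} (hx : ∀ i, 0 ≤ x i)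
    (h : x.degree = 1) : ∃ i, x = single i 1 := by
  have hne : x.support.Nonempty := by
    rw [Finsupp.support_nonempty_iff]
    rintro rfl
    simp at h
  have hcard := card_support_le_degree hx
  obtain ⟨i, hi⟩ := card_eq_one.1 (by have := hne.card_pos; omega : #x.support = 1)
  have hxi := (support_eq_singleton.1 hi).2
  rw [hxi, degree_single] at h
  exact ⟨i, h ▸ hxi⟩

lemma mem_support_sum_iff_of_nonneg {ι : Type*} {s : Finset ι} {f : ι → I →₀ ℤ}
    (hf : ∀ n ∈ s, ∀ i, 0 ≤ f n i) {i : I} :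
    i ∈ (∑ n ∈ s, f n).support ↔ ∃ n ∈ s, i ∈ (f n).support := by
  simp only [mem_support_iff, finsetSum_apply, ne_eq,
    sum_eq_zero_iff_of_nonneg fun n hn => hf n hn i, not_forall, exists_prop]

variable {F : Type*} [FunLike F (I →₀ ℤ) (I →₀ ℤ)] [AddMonoidHomClass F (I →₀ ℤ) (I →₀ ℤ)]

lemma eq_sum_smul_map_single_of_map_eq_self {T : F} {β : I →₀ ℤ} (hTβ : T β = β) :
    β = ∑ t ∈ β.support, β t • T (single t 1) := by
  conv_lhs => rw [← hTβ, ← β.sum_single]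
  simp only [Finsupp.sum, map_sum, ← map_zsmul, smul_single_one]

-- `degree` is the height: `∑ₜ βₜ = ht β = ∑ₜ βₜ ht (T αₜ)` with every `ht (T αₜ) ≥ 1`.
lemma degree_map_single_eq_one_of_map_eq_self {T : F} {β : I →₀ ℤ} (hβ : ∀ i, 0 ≤ β i)
    (hTβ : T β = β) (hpos : ∀ s ∈ β.support, IsPosV (T (single s 1)))
    {s : I} (hs : s ∈ β.support) : (T (single s 1)).degree = 1 := by
  have hle : ∀ t ∈ β.support, β t * 1 ≤ β t * (T (single t 1)).degree := fun t ht =>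
    mul_le_mul_of_nonneg_left (hpos t ht).one_le_degree (hβ t)
  have hsum : ∑ t ∈ β.support, β t * 1 = ∑ t ∈ β.support, β t * (T (single t 1)).degree := by
    calc ∑ t ∈ β.support, β t * 1 = β.degree := by simp [degree_apply]
      _ = _ := by
        conv_lhs => rw [eq_sum_smul_map_single_of_map_eq_self hTβ]
        simp [map_sum, map_zsmul]
  have := (sum_eq_sum_iff_of_le hle).1 hsum s hs
  exact (mul_left_cancel₀ (mem_support_iff.1 hs) this).symm

lemma exists_map_single_eq_single_of_map_eq_self {T : F} {β : I →₀ ℤ} (hβ : ∀ i, 0 ≤ β i)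
    (hTβ : T β = β) (hpos : ∀ s ∈ β.support, IsPosV (T (single s 1)))
    {s : I} (hs : s ∈ β.support) : ∃ s' ∈ β.support, T (single s 1) = single s' 1 := by
  obtain ⟨s', hs'⟩ := exists_eq_single_of_nonneg_of_degree_eq_one (hpos s hs).2
    (degree_map_single_eq_one_of_map_eq_self hβ hTβ hpos hs)
  refine ⟨s', ?_, hs'⟩
  have hβs : β s * T (single s 1) s' ≤ β s' := by
    conv_rhs => rw [eq_sum_smul_map_single_of_map_eq_self hTβ]
    rw [finsetSum_apply]
    exact single_le_sum (f := fun t => (β t • T (single t 1)) s')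
      (fun t ht => mul_nonneg (hβ t) ((hpos t ht).2 s')) hs
  rw [hs', single_eq_same, mul_one] at hβs
  have := (hβ s).lt_of_ne (mem_support_iff.1 hs).symm
  exact mem_support_iff.2 (by omega)

end Lattice

lemma map_sum_range_iterate_eq_self {M F : Type*} [AddCommMonoid M] [FunLike F M M]
    [AddMonoidHomClass F M M] {f : F} {a : M} {m : ℕ} (ha : f^[m] a = a) :
    f (∑ n ∈ range m, f^[n] a) = ∑ n ∈ range m, f^[n] a := by
  cases m with
  | zero => simp
  | succ k =>
    simp only [map_sum, ← iterate_succ_apply' (⇑f)]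
    rw [sum_range_succ, ha, sum_range_succ' (fun n => (⇑f)^[n] a)]
    rfl

lemma exists_pos_iterate_eq_self_of_finite {α : Type*} {f : α → α} (hf : Injective f)
    {s : Set α} (hs : s.Finite) {a : α} (ha : ∀ n, f^[n] a ∈ s) : ∃ m, 0 < m ∧ f^[m] a = a := by
  obtain ⟨k, -, l, -, hkl, heq⟩ :=
    Set.infinite_univ.exists_ne_map_eq_of_mapsTo (fun n _ => ha n) hs
  rcases hkl.lt_or_gt with h | h
  · exact ⟨l - k, by omega, iterate_cancel hf heq.symm⟩
  · exact ⟨k - l, by omega, iterate_cancel hf heq⟩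

lemma finite_Phi [Finite I] [Finite W] (ρ : W →* AddAut (I →₀ ℤ)) : (Phi ρ).Finite :=
  (Set.finite_range fun x : W × I => ρ x.1 (single x.2 1)).subset
    (by rintro _ ⟨u, i, rfl⟩; exact ⟨(u, i), rfl⟩)

lemma isPosV_of_minRight (cs : CoxeterSystem M W) (ρ : W →* AddAut (I →₀ ℤ))
    (hlen : ∀ (w : W) (i : I),
      cs.length (w * cs.simple i) = cs.length w + 1 → IsPosV (ρ w (single i 1)))
    {J : Set I} {w : W} (hw : MinRight cs J w) {i : I} (hi : i ∈ J) :
    IsPosV (ρ w (single i 1)) := by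
  have := hw _ (Subgroup.subset_closure (Set.mem_image_of_mem cs.simple hi))
  rcases cs.length_mul_simple w i with h | h
  · exact hlen w i h
  · omega

theorem iterates_pos_mem_PhiK_general [Finite I] [Finite W]
    (cs : CoxeterSystem M W) (ρ : W →* AddAut (I →₀ ℤ))
    (hlen : ∀ (w : W) (i : I),
      cs.length (w * cs.simple i) = cs.length w + 1 ↔
        IsPosV (ρ w (Finsupp.single i 1)))
    -- the diagram automorphism δ
    (p : Equiv.Perm I)
    (J : Set I) (w : W) (hw : MinRight cs (p '' J) w)
    (a : I →₀ ℤ)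
    (ha : ∀ n : ℕ, (fun x => ρ w (dmap p x))^[n] a ∈ PhiJPos ρ J) :
    a ∈ PhiJPos ρ (IsetR ρ p J w) := by
  let T : (I →₀ ℤ) ≃+ (I →₀ ℤ) := (Finsupp.domCongr p).trans (ρ w)
  have hT : ∀ n, T^[n] a ∈ PhiJPos ρ J := ha
  have hTsingle : ∀ s, T (single s 1) = ρ w (single (p s) 1) := fun s => by simp [T]
  obtain ⟨m, hm, hper⟩ := exists_pos_iterate_eq_self_of_finite T.injective (finite_Phi ρ)
    fun n => (hT n).1.1
  have hnonneg : ∀ n ∈ range m, ∀ i, 0 ≤ (T^[n] a) i := fun n _ => (hT n).2.2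
  set β := ∑ n ∈ range m, T^[n] a
  have hβ : ∀ i, 0 ≤ β i := fun i => by
    simpa only [β, finsetSum_apply] using sum_nonneg fun n hn => hnonneg n hn i
  have hβJ : ∀ s ∈ β.support, s ∈ J := fun s hs => by
    obtain ⟨n, -, hn⟩ := (mem_support_sum_iff_of_nonneg hnonneg).1 hs
    exact (hT n).1.2 s (mem_support_iff.1 hn)
  have hK : IsStabR ρ p J w β.support := by
    refine ⟨hβJ, fun k hk => ?_⟩
    simpa only [hTsingle, Finset.mem_coe] using exists_map_single_eq_single_of_map_eq_self hβ
      (map_sum_range_iterate_eq_self hper)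
      (fun s hs => hTsingle s ▸ isPosV_of_minRight cs ρ (fun u i => (hlen u i).1) hw
        (Set.mem_image_of_mem p (hβJ s hs))) hk
  refine ⟨⟨(hT 0).1.1, fun i hi => ⟨_, hK, ?_⟩⟩, (hT 0).2⟩
  exact (mem_support_sum_iff_of_nonneg hnonneg).2 ⟨0, mem_range.2 hm, mem_support_iff.2 hi⟩

theorem iterates_pos_mem_PhiK [Finite I] [Finite W]
    (cs : CoxeterSystem M W) (ρ : W →* AddAut (I →₀ ℤ))
    (hlen : ∀ (w : W) (i : I),
      cs.length (w * cs.simple i) = cs.length w + 1 ↔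
        IsPosV (ρ w (Finsupp.single i 1)))
    (hsi : ∀ i : I, ρ (cs.simple i) (Finsupp.single i 1) = -Finsupp.single i 1)
    -- the diagram automorphism δ
    (p : Equiv.Perm I) (δ : MulAut W)
    (hδs : ∀ i, δ (cs.simple i) = cs.simple (p i))
    (hδρ : ∀ (w : W) (x : I →₀ ℤ),
      dmap p (ρ w x) = ρ (δ w) (dmap p x))
    (J : Set I) (w : W) (hw : MinRight cs (p '' J) w)
    (a : I →₀ ℤ)
    (ha : ∀ n : ℕ, (fun x => ρ w (dmap p x))^[n] a ∈ PhiJPos ρ J) :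
    a ∈ PhiJPos ρ (IsetR ρ p J w) :=
  iterates_pos_mem_PhiK_general cs ρ hlen p J w hw a ha
end

section
/- Let $W$ be a Weyl group, $J \subset I$, $\delta$ a diagram automorphism, and let $(J_n, w_n)_{n\geq 0} \in \mathcal{T}(J,\delta)$ be the sequence corresponding to $w \in W^{\delta(J)}$. Suppose $u \in W_J$, $v \in W_{\delta(J)}$ with $\mathrm{supp}(v) = \delta(\mathrm{supp}(u))$ and $wv = ux$ for some $x \in W^{\delta(J)}$. Then for every $n \geq 0$, $u \in W_{J_n}$. -/
/-!
Statement 13: with `(J_n, w_n) ∈ 𝓣(J, δ)` the Bédard sequence corresponding to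
`w ∈ W^{δ(J)}`, if `u ∈ W_J`, `v ∈ W_{δ(J)}`, `supp(v) = δ(supp(u))` and
`w v = u x` with `x ∈ W^{δ(J)}`, then `u ∈ W_{J_n}` for every `n`.
-/

open CoxeterSystem

variable {I W : Type*} [Group W] {M : CoxeterMatrix I}

def Supp (cs : CoxeterSystem M W) (w : W) : Set I :=
  {i | ∃ ω : List I, cs.IsReduced ω ∧ cs.wordProd ω = w ∧ i ∈ ω}

/-!
Induct on `n`. Put `d = w_n`: the Bédard conditions make `d` the shortest element of both
`W_{J_n} d` and `d W_{δ(J_n)}`, and `w ∈ W_{J_n} d`. As `u ∈ W_{J_n}` and `supp v = δ(supp u)`, also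
`v ∈ W_{δ(J_n)}`, so `x = b d v` with `b = u⁻¹ w d⁻¹ ∈ W_{J_n}`. Walking along a reduced word of
`v`, Deodhar's lemma gives for each letter `k` either `d s_k d⁻¹ = s_j` with `j ∈ J_n`, or that
`d s_k` is again shortest in its `W_{J_n}`-coset; the second case is impossible, since
additivity of lengths would then contradict the minimality of `x` in `x W_{δ(J_n)}`. Applied
to the letters `δ(i)`, `i ∈ supp u`, this puts `u` in `W_{J_{n+1}}`.

The exchange condition, needed throughout, comes from Tits' permutation representation of
`W` on `W × ZMod 2`.
-/

namespace CoxeterSystem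

variable (cs : CoxeterSystem M W)

local prefix:100 "s " => cs.simple
local prefix:100 "π " => cs.wordProd
local prefix:100 "ℓ " => cs.length
local prefix:100 "ris " => cs.rightInvSeq

section TitsRepresentation

open scoped Classical

noncomputable def titsPerm (i : I) : Equiv.Perm (W × ZMod 2) :=
  Function.Involutive.toPerm (fun x => (s i * x.1 * s i, x.2 + if x.1 = s i then 1 else 0)) <| by
    rintro ⟨t, ε⟩
    have h : s i * (t * s i) = s i ↔ t = s i := by
      rw [mul_eq_left, mul_eq_one_iff_eq_inv, inv_simple]
    simp only [mul_assoc, h, add_assoc, CharTwo.add_self_eq_zero, add_zero,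
      simple_mul_simple_cancel_left, simple_mul_simple_self, mul_one]

theorem titsPerm_apply (i : I) (t : W) (ε : ZMod 2) :
    cs.titsPerm i (t, ε) = (s i * t * s i, ε + if t = s i then 1 else 0) :=
  rfl

theorem titsPerm_mul_pow_apply (i j : I) (n : ℕ) (t : W) (ε : ZMod 2) :
    ((cs.titsPerm i * cs.titsPerm j) ^ n) (t, ε) =
      ((s i * s j) ^ n * t * ((s i * s j) ^ n)⁻¹,
        ε + ∑ m ∈ Finset.range (2 * n), if t = s j * (s i * s j) ^ m then 1 else 0) := by
  induction n generalizing t ε with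
  | zero => simp
  | succ n ih =>
    -- conjugation by `s i * s j` shifts the reflections `s j * (s i * s j) ^ m` by two steps
    have hshift (m : ℕ) : s i * (s j * t * s j) * s i = s j * (s i * s j) ^ m ↔
        t = s j * (s i * s j) ^ (m + 1 + 1) := by
      have hq : s j * (s i * s j) ^ m =
          (s i * s j) * (s j * (s i * s j) ^ (m + 1 + 1)) * (s i * s j)⁻¹ := by
        rw [pow_succ, pow_succ']
        simp only [mul_assoc, mul_inv_cancel, mul_one, simple_mul_simple_cancel_left]
      rw [hq, show s i * (s j * t * s j) * s i = (s i * s j) * t * (s i * s j)⁻¹ by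
        simp only [mul_inv_rev, inv_simple, mul_assoc], mul_left_inj, mul_right_inj]
    have h1 : s j * t * s j = s i ↔ t = s j * (s i * s j) := by
      constructor <;> intro h <;> [rw [← h]; rw [h]] <;>
        simp only [mul_assoc, simple_mul_simple_self, simple_mul_simple_cancel_left, mul_one]
    have hsum : ∑ m ∈ Finset.range (2 * n),
        (if s i * (s j * t * s j) * s i = s j * (s i * s j) ^ m then (1 : ZMod 2) else 0) =
        ∑ m ∈ Finset.range (2 * n), if t = s j * (s i * s j) ^ (m + 1 + 1) then 1 else 0 :=
      Finset.sum_congr rfl fun m _ => if_congr (hshift m) rfl rfl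
    rw [pow_succ, Equiv.Perm.mul_apply, Equiv.Perm.mul_apply, titsPerm_apply, titsPerm_apply, ih,
      hsum, if_congr h1 rfl rfl, show 2 * (n + 1) = 2 * n + 1 + 1 by ring, Finset.sum_range_succ',
      Finset.sum_range_succ']
    refine Prod.ext (by simp only [pow_succ, mul_inv_rev, inv_simple, mul_assoc]) ?_
    simp only [zero_add, pow_zero, pow_one, mul_one]
    ring

theorem isLiftable_titsPerm : M.IsLiftable cs.titsPerm := by
  intro i j
  ext ⟨t, ε⟩ : 1
  -- the `2 * M i j` reflections `s j * (s i * s j) ^ m` repeat with period `M i j`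
  rw [titsPerm_mul_pow_apply, simple_mul_simple_pow, two_mul, Finset.sum_range_add]
  simp only [pow_add, simple_mul_simple_pow, one_mul, mul_one, inv_one, CharTwo.add_self_eq_zero,
    add_zero, Equiv.Perm.one_apply]

noncomputable def titsRep : W →* Equiv.Perm (W × ZMod 2) :=
  cs.lift ⟨cs.titsPerm, cs.isLiftable_titsPerm⟩

theorem titsRep_wordProd_apply (ω : List I) (t : W) (ε : ZMod 2) :
    cs.titsRep (π ω) (t, ε) = (π ω * t * (π ω)⁻¹, ε + (ris ω).count t) := by
  induction ω generalizing ε with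
  | nil => simp
  | cons i ω ih =>
    have h : π ω * t * (π ω)⁻¹ = s i ↔ (π ω)⁻¹ * s i * π ω = t := by
      constructor <;> intro he <;> rw [← he] <;> group
    rw [wordProd_cons, map_mul, Equiv.Perm.mul_apply, ih, titsRep, lift_apply_simple,
      titsPerm_apply, rightInvSeq, List.count_cons, if_congr h rfl rfl]
    refine Prod.ext (by simp only [mul_inv_rev, inv_simple, mul_assoc]) ?_
    simp only [beq_iff_eq]
    push_cast
    ring

theorem natCast_count_rightInvSeq_eq {ω ω' : List I} (h : π ω = π ω') (t : W) :
    ((ris ω).count t : ZMod 2) = (ris ω').count t := by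
  have := congr_arg (fun g => (cs.titsRep g (t, 0)).2) h
  simpa only [titsRep_wordProd_apply, zero_add] using this

end TitsRepresentation

theorem simple_mem_rightInvSeq_of_isRightDescent {ω : List I} {k : I}
    (h : cs.IsRightDescent (π ω) k) : s k ∈ ris ω := by
  classical
  obtain ⟨ω', hω', he⟩ := cs.exists_isReduced (π ω * s k)
  have hω'k : s k ∉ ris ω' := fun hmem => by
    have := (cs.isRightInversion_of_mem_rightInvSeq hω' hmem).2
    rw [← he, simple_mul_simple_cancel_right] at this
    exact lt_asymm h this
  have hconj : s k ∉ (ris ω').map (MulAut.conj (s k)) := by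
    rw [List.mem_map]
    rintro ⟨t, ht, hkt⟩
    have hts : t = s k :=
      (MulAut.conj (s k)).injective (by rw [hkt, MulAut.conj_apply, mul_inv_cancel_right])
    exact hω'k (hts ▸ ht)
  by_contra hk
  have hpar := cs.natCast_count_rightInvSeq_eq (ω := ω'.concat k) (ω' := ω)
    (by rw [wordProd_concat, ← he, simple_mul_simple_cancel_right]) (s k)
  rw [List.count_eq_zero.mpr hk, rightInvSeq_concat, List.concat_eq_append, List.count_append,
    List.count_eq_zero.mpr hconj, List.count_singleton_self] at hpar
  exact absurd hpar (by decide)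

theorem exists_eraseIdx_of_isRightDescent {ω : List I} {k : I} (h : cs.IsRightDescent (π ω) k) :
    ∃ q < ω.length, π ω * s k = π (ω.eraseIdx q) := by
  obtain ⟨q, hq, hqk⟩ := List.getElem_of_mem (cs.simple_mem_rightInvSeq_of_isRightDescent h)
  refine ⟨q, by simpa using hq, ?_⟩
  rw [← wordProd_mul_getD_rightInvSeq, List.getD_eq_getElem _ _ hq, hqk]

theorem exists_isReduced_sublist_append_singleton {ω : List I} (hω : cs.IsReduced ω) (k : I) :
    ∃ ω' : List I, ω'.Sublist (ω ++ [k]) ∧ cs.IsReduced ω' ∧ π ω' = π ω * s k := by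
  rcases cs.length_mul_simple (π ω) k with hup | hdown
  · refine ⟨ω ++ [k], List.Sublist.refl _, ?_, by rw [wordProd_append, wordProd_singleton]⟩
    rw [IsReduced, wordProd_append, wordProd_singleton, hup, hω.eq, List.length_append,
      List.length_singleton]
  · obtain ⟨q, hq, he⟩ := cs.exists_eraseIdx_of_isRightDescent (ω := ω) (k := k) (by
      unfold IsRightDescent; omega)
    refine ⟨ω.eraseIdx q, (List.eraseIdx_sublist ω q).trans (List.sublist_append_left ω [k]),
      ?_, he.symm⟩
    rw [IsReduced, ← he, List.length_eraseIdx_of_lt hq]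
    rw [hω.eq] at hdown
    omega

theorem exists_isReduced_sublist (ω : List I) :
    ∃ ω' : List I, ω'.Sublist ω ∧ cs.IsReduced ω' ∧ π ω' = π ω := by
  induction ω using List.reverseRecOn with
  | nil => exact ⟨[], List.Sublist.refl _, by simp [IsReduced], rfl⟩
  | append_singleton ω k ih =>
    obtain ⟨ω₁, hω₁, hred₁, he₁⟩ := ih
    obtain ⟨ω₂, hω₂, hred₂, he₂⟩ := cs.exists_isReduced_sublist_append_singleton hred₁ k
    exact ⟨ω₂, hω₂.trans (hω₁.append_right [k]), hred₂,
      by rw [he₂, he₁, wordProd_append, wordProd_singleton]⟩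

theorem simple_mem_parab {L : Set I} {i : I} (h : i ∈ L) : s i ∈ parab cs L :=
  Subgroup.subset_closure ⟨i, h, rfl⟩

theorem parab_mono {L L' : Set I} (h : L ⊆ L') : parab cs L ≤ parab cs L' :=
  Subgroup.closure_mono (Set.image_mono h)

theorem wordProd_mem_parab {L : Set I} {ω : List I} (h : ∀ a ∈ ω, s a ∈ parab cs L) :
    π ω ∈ parab cs L :=
  Subgroup.list_prod_mem _ (by simpa using h)

theorem wordProd_mem_parab_of_forall_mem {L : Set I} {ω : List I} (h : ∀ a ∈ ω, a ∈ L) :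
    π ω ∈ parab cs L :=
  cs.wordProd_mem_parab fun a ha => cs.simple_mem_parab (h a ha)

theorem exists_isReduced_of_mem_parab {L : Set I} {w : W} (hw : w ∈ parab cs L) :
    ∃ ω : List I, cs.IsReduced ω ∧ (∀ a ∈ ω, a ∈ L) ∧ π ω = w := by
  induction hw using Subgroup.closure_induction_right with
  | one => exact ⟨[], by simp [IsReduced], by simp, rfl⟩
  | mul_right w _ _ hk ih | mul_inv_cancel w _ _ hk ih =>
    obtain ⟨k, hk, rfl⟩ := hk
    obtain ⟨ω, hω, hωL, rfl⟩ := ih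
    obtain ⟨ω', hω', hred, he⟩ := cs.exists_isReduced_sublist_append_singleton hω k
    refine ⟨ω', hred, fun a ha => ?_, by simpa using he⟩
    rcases List.mem_append.mp (hω'.subset ha) with ha | ha
    · exact hωL a ha
    · exact (List.mem_singleton.mp ha) ▸ hk

theorem exists_eq_simple_of_mem_parab_of_length_eq_one {L : Set I} {w : W}
    (hw : w ∈ parab cs L) (hl : ℓ w = 1) : ∃ j ∈ L, w = s j := by
  obtain ⟨ω, hω, hωL, rfl⟩ := cs.exists_isReduced_of_mem_parab hw
  obtain ⟨j, rfl⟩ := List.length_eq_one_iff.mp (hω.eq.symm.trans hl)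
  exact ⟨j, hωL j (List.mem_singleton_self j), wordProd_singleton cs j⟩

theorem simple_mem_parab_of_isRightDescent {L : Set I} {w : W} (hw : w ∈ parab cs L) {k : I}
    (h : cs.IsRightDescent w k) : s k ∈ parab cs L := by
  obtain ⟨ω, -, hωL, rfl⟩ := cs.exists_isReduced_of_mem_parab hw
  obtain ⟨q, -, he⟩ := cs.exists_eraseIdx_of_isRightDescent h
  have hq : π (ω.eraseIdx q) ∈ parab cs L :=
    cs.wordProd_mem_parab_of_forall_mem fun a ha => hωL a ((ω.eraseIdx_sublist q).subset ha)
  simpa [← he] using mul_mem (inv_mem hw) hq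

theorem simple_mem_parab_of_isLeftDescent {L : Set I} {w : W} (hw : w ∈ parab cs L) {k : I}
    (h : cs.IsLeftDescent w k) : s k ∈ parab cs L :=
  cs.simple_mem_parab_of_isRightDescent (inv_mem hw) (cs.isRightDescent_inv_iff.mpr h)

theorem simple_mem_parab_of_mem_of_isReduced {L : Set I} {ω : List I} (hω : cs.IsReduced ω)
    (hωL : π ω ∈ parab cs L) {i : I} (hi : i ∈ ω) : s i ∈ parab cs L := by
  induction ω with
  | nil => simp at hi
  | cons a ω ih =>
    have hω' : cs.IsReduced ω := by simpa using hω.drop 1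
    have ha : s a ∈ parab cs L := by
      refine cs.simple_mem_parab_of_isLeftDescent hωL ?_
      rw [IsLeftDescent, wordProd_cons, simple_mul_simple_cancel_left, hω'.eq, ← wordProd_cons,
        hω.eq, List.length_cons]
      omega
    rcases List.mem_cons.mp hi with rfl | hi
    · exact ha
    · refine ih hω' ?_ hi
      simpa [wordProd_cons] using mul_mem ha hωL

theorem simple_mem_parab_of_mem_supp {L : Set I} {w : W} (hw : w ∈ parab cs L) {i : I}
    (hi : i ∈ Supp cs w) : s i ∈ parab cs L := by
  obtain ⟨ω, hω, rfl, hi⟩ := hi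
  exact cs.simple_mem_parab_of_mem_of_isReduced hω hw hi

theorem mem_parab_of_forall_mem_supp {L : Set I} {w : W} (h : ∀ i ∈ Supp cs w, s i ∈ parab cs L) :
    w ∈ parab cs L := by
  obtain ⟨ω, hω, rfl⟩ := cs.exists_isReduced w
  exact cs.wordProd_mem_parab fun a ha => h a ⟨ω, hω, rfl, ha⟩

theorem map_mem_parab {p : I → I} (f : W →* W) (hf : ∀ i, f (s i) = s (p i)) {L : Set I} {w : W}
    (hw : w ∈ parab cs L) : f w ∈ parab cs (p '' L) := by
  have hmap : (parab cs L).map f = parab cs (p '' L) := by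
    rw [parab, MonoidHom.map_closure, Set.image_image, parab, Set.image_image]
    simp only [hf]
  exact hmap ▸ Subgroup.mem_map_of_mem f hw

theorem exists_mul_eq_mul_of_isRightDescent {J : Set I} {c d : W} (hc : c ∈ parab cs J) {k : I}
    (hcd : cs.IsRightDescent (c * d) k) (hdk : ¬cs.IsRightDescent d k) :
    ∃ c' ∈ parab cs J, d * s k = c' * d := by
  obtain ⟨β, -, hβJ, rfl⟩ := cs.exists_isReduced_of_mem_parab hc
  obtain ⟨ρ, hρ, rfl⟩ := cs.exists_isReduced d
  rw [← wordProd_append] at hcd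
  obtain ⟨q, hq, he⟩ := cs.exists_eraseIdx_of_isRightDescent hcd
  rw [wordProd_append, mul_assoc] at he
  rcases lt_or_ge q β.length with hqβ | hqβ
  · rw [List.eraseIdx_append_of_lt_length hqβ, wordProd_append] at he
    refine ⟨(π β)⁻¹ * π (β.eraseIdx q), mul_mem (inv_mem hc)
      (cs.wordProd_mem_parab_of_forall_mem fun a ha => hβJ a ((β.eraseIdx_sublist q).subset ha)),
      ?_⟩
    rw [mul_assoc, ← he, inv_mul_cancel_left]
  · rw [List.eraseIdx_append_of_length_le hqβ, wordProd_append] at he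
    refine absurd ?_ hdk
    rw [IsRightDescent, mul_left_cancel he, hρ.eq]
    have := cs.length_wordProd_le (ρ.eraseIdx (q - β.length))
    rw [List.length_eraseIdx_of_lt (by simp at hq; omega)] at this
    have : 0 < ρ.length := by simp at hq; omega
    omega

end CoxeterSystem

section MinimalCosetRepresentatives

variable {cs : CoxeterSystem M W}

local prefix:100 "s " => cs.simple
local prefix:100 "π " => cs.wordProd
local prefix:100 "ℓ " => cs.length

theorem MinRight.mono {K K' : Set I} {x : W} (hx : MinRight cs K' x) (hK : K ⊆ K') :
    MinRight cs K x :=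
  fun c hc => hx c (cs.parab_mono hK hc)

theorem MinRight.minLeft_inv {K : Set I} {x : W} (hx : MinRight cs K x) : MinLeft cs K x⁻¹ :=
  fun c hc => by
    rw [length_inv, ← length_inv _ (c * x⁻¹), mul_inv_rev, inv_inv]
    exact hx c⁻¹ (inv_mem hc)

theorem MinLeft.length_mul {J : Set I} {d b : W} (hd : MinLeft cs J d) (hb : b ∈ parab cs J) :
    ℓ (b * d) = ℓ b + ℓ d := by
  obtain ⟨β, -, hβJ, rfl⟩ := cs.exists_isReduced_of_mem_parab hb
  obtain ⟨ρ, hρ, rfl⟩ := cs.exists_isReduced d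
  obtain ⟨γ, hγ, hγred, hγe⟩ := cs.exists_isReduced_sublist (β ++ ρ)
  obtain ⟨γ₁, γ₂, rfl, hγ₁, hγ₂⟩ := List.sublist_append_iff.mp hγ
  have hγ₁J : π γ₁ ∈ parab cs J :=
    cs.wordProd_mem_parab_of_forall_mem fun a ha => hβJ a (hγ₁.subset ha)
  rw [wordProd_append, wordProd_append] at hγe
  -- `γ₂` is a subword of `ρ` and no shorter, since `π ρ` is shortest in `W_J * π ρ`
  have hle : ℓ (π ρ) ≤ γ₂.length :=
    calc ℓ (π ρ) ≤ ℓ ((π γ₁)⁻¹ * π β * π ρ) := hd _ (mul_mem (inv_mem hγ₁J) hb)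
      _ = ℓ (π γ₂) := by rw [mul_assoc, ← hγe, inv_mul_cancel_left]
      _ ≤ γ₂.length := cs.length_wordProd_le γ₂
  obtain rfl : γ₂ = ρ := hγ₂.eq_of_length (le_antisymm hγ₂.length_le (hρ.eq ▸ hle))
  have hβγ₁ : π γ₁ = π β := mul_right_cancel hγe
  have := hγred.eq
  rw [wordProd_append, hγe, List.length_append] at this
  have := cs.length_wordProd_le γ₁
  have := cs.length_mul_le (π β) (π γ₂)
  rw [hβγ₁] at *
  omega

theorem MinRight.length_mul {K : Set I} {x c : W} (hx : MinRight cs K x) (hc : c ∈ parab cs K) :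
    ℓ (x * c) = ℓ x + ℓ c := by
  have := hx.minLeft_inv.length_mul (inv_mem hc)
  rwa [← mul_inv_rev, length_inv, length_inv, length_inv, add_comm] at this

/-- Deodhar's lemma. -/
theorem MinLeft.exists_simple_mul_eq_or_mul_simple {J : Set I} {d : W} (hd : MinLeft cs J d)
    {k : I} (hk : ℓ d < ℓ (d * s k)) : (∃ j ∈ J, s j * d = d * s k) ∨ MinLeft cs J (d * s k) := by
  rw [or_iff_not_imp_left]
  intro hno c hc
  by_contra! hlt
  have hdk : ℓ (d * s k) = ℓ d + 1 := by have := cs.length_mul_simple d k; omega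
  have hcd : cs.IsRightDescent (c * d) k := by
    have := hd c hc
    have := cs.length_mul_simple_ne (c * d) k
    rw [mul_assoc] at this
    unfold IsRightDescent
    rw [mul_assoc]
    omega
  obtain ⟨c', hc', he⟩ := cs.exists_mul_eq_mul_of_isRightDescent hc hcd (not_lt.mpr hk.le)
  have hc'1 : ℓ c' = 1 := by have := hd.length_mul hc'; rw [← he] at this; omega
  obtain ⟨j, hj, rfl⟩ := cs.exists_eq_simple_of_mem_parab_of_length_eq_one hc' hc'1
  exact hno ⟨j, hj, he.symm⟩

theorem MinLeft.exists_conj_eq_simple {J K : Set I} {d b : W} (hdJ : MinLeft cs J d)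
    (hdK : MinRight cs K d) (hb : b ∈ parab cs J) {κ : List I} (hκ : cs.IsReduced κ)
    (hκK : ∀ a ∈ κ, s a ∈ parab cs K) (hx : MinRight cs K (b * d * π κ)) :
    ∀ k ∈ κ, ∃ j ∈ J, d⁻¹ * s j * d = s k := by
  induction κ generalizing b with
  | nil => simp
  | cons k₀ κ ih =>
    have hκ' : cs.IsReduced κ := by simpa using hκ.drop 1
    have hκK' : ∀ a ∈ κ, s a ∈ parab cs K := fun a ha => hκK a (List.mem_cons_of_mem k₀ ha)
    have hdk : ℓ d < ℓ (d * s k₀) :=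
      lt_of_le_of_ne (hdK _ (hκK k₀ List.mem_cons_self)) (cs.length_mul_simple_ne d k₀).symm
    rcases hdJ.exists_simple_mul_eq_or_mul_simple hdk with ⟨j, hj, hjd⟩ | hfree
    · have hx' : b * d * π (k₀ :: κ) = b * s j * d * π κ := by
        rw [wordProd_cons, mul_assoc b (s j), hjd]
        simp only [mul_assoc]
      rintro k (_ | ⟨_, hk⟩)
      · exact ⟨j, hj, by rw [mul_assoc, hjd, inv_mul_cancel_left]⟩
      · exact ih (mul_mem hb (cs.simple_mem_parab hj)) hκ' hκK' (hx' ▸ hx) k hk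
    · -- additivity on both sides of `x` would give `ℓ (b * d) = ℓ x + κ.length + 1` and
      -- `ℓ (b * (d * s k₀)) = ℓ x + κ.length`, although `d * s k₀` is longer than `d`
      exfalso
      have h₁ := hx.length_mul (inv_mem (cs.wordProd_mem_parab hκK))
      have h₂ := hx.length_mul (inv_mem (cs.wordProd_mem_parab hκK'))
      rw [mul_inv_cancel_right, hdJ.length_mul hb, length_inv, hκ.eq, List.length_cons] at h₁
      rw [show b * d * π (k₀ :: κ) * (π κ)⁻¹ = b * (d * s k₀) by
        simp only [wordProd_cons, mul_assoc, mul_inv_cancel, mul_one], hfree.length_mul hb,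
        length_inv, hκ'.eq] at h₂
      omega

end MinimalCosetRepresentatives

namespace BedardSeq

variable {cs : CoxeterSystem M W} {p : Equiv.Perm I} {J : Set I} {Jseq : ℕ → Set I}
  {wseq : ℕ → W}

theorem subset (h : BedardSeq cs p J Jseq wseq) (n : ℕ) : Jseq n ⊆ J :=
  h.1 ▸ h.antitone (Nat.zero_le n)

theorem mul_inv_mem_parab (h : BedardSeq cs p J Jseq wseq) {n N : ℕ} (hnN : n ≤ N) :
    wseq N * (wseq n)⁻¹ ∈ parab cs (Jseq n) := by
  induction N, hnN using Nat.le_induction with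
  | base => rw [mul_inv_cancel]; exact one_mem _
  | succ N hnN ih =>
    rw [← inv_mul_cancel_right (wseq (N + 1)) (wseq N), mul_assoc]
    exact mul_mem (cs.parab_mono (h.antitone hnN) (h.2.2.2 N)) ih

end BedardSeq

theorem mem_parab_Jn_general
    (cs : CoxeterSystem M W) (p : Equiv.Perm I) (δ : MulAut W)
    (hδ : ∀ i, δ (cs.simple i) = cs.simple (p i))
    (J : Set I) (Jseq : ℕ → Set I) (wseq : ℕ → W)
    (hJw : BedardSeq cs p J Jseq wseq)
    (w : W) (m : ℕ) (hm : ∀ n, m ≤ n → wseq n = w)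
    (x u v : W) (hx : MinRight cs (p '' J) x)
    (hu : u ∈ parab cs J)
    (hsupp : Supp cs v = p '' Supp cs u)
    (heq : w * v = u * x) :
    ∀ n, u ∈ parab cs (Jseq n) := by
  intro n
  induction n with
  | zero => exact hJw.1 ▸ hu
  | succ n ih =>
    obtain ⟨hdJ, hdK⟩ := hJw.2.2.1 n
    have ha : w * (wseq n)⁻¹ ∈ parab cs (Jseq n) :=
      hm (n + m) (by omega) ▸ hJw.mul_inv_mem_parab (by omega)
    have hv : v ∈ parab cs (p '' Jseq n) := cs.mem_parab_of_forall_mem_supp fun _ hk => by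
      rw [hsupp] at hk
      obtain ⟨i, hi, rfl⟩ := hk
      exact hδ i ▸ cs.map_mem_parab δ.toMonoidHom hδ (cs.simple_mem_parab_of_mem_supp ih hi)
    have hx' : MinRight cs (p '' Jseq n) (u⁻¹ * (w * (wseq n)⁻¹) * wseq n * v) := by
      rw [mul_assoc u⁻¹, inv_mul_cancel_right, mul_assoc, heq, inv_mul_cancel_left]
      exact hx.mono (Set.image_mono (hJw.subset n))
    obtain ⟨ω, hω, hωJ, rfl⟩ := cs.exists_isReduced_of_mem_parab ih
    refine cs.wordProd_mem_parab_of_forall_mem fun i hi => ?_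
    rw [hJw.2.1 n]
    refine ⟨hωJ i hi, ?_⟩
    obtain ⟨κ, hκ, rfl, hiκ⟩ : p i ∈ Supp cs v := hsupp ▸ ⟨i, ⟨ω, hω, rfl, hi⟩, rfl⟩
    exact hdJ.exists_conj_eq_simple hdK (mul_mem (inv_mem ih) ha) hκ
      (fun a ha => cs.simple_mem_parab_of_mem_supp hv ⟨κ, hκ, rfl, ha⟩) hx' (p i) hiκ

theorem mem_parab_Jn [Finite I]
    (cs : CoxeterSystem M W) (p : Equiv.Perm I) (δ : MulAut W)
    (hδ : ∀ i, δ (cs.simple i) = cs.simple (p i))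
    (J : Set I) (Jseq : ℕ → Set I) (wseq : ℕ → W)
    (hJw : BedardSeq cs p J Jseq wseq)
    (w : W) (m : ℕ) (hm : ∀ n, m ≤ n → wseq n = w)
    (hw : MinRight cs (p '' J) w)
    (x u v : W) (hx : MinRight cs (p '' J) x)
    (hu : u ∈ parab cs J) (hv : v ∈ parab cs (p '' J))
    (hsupp : Supp cs v = p '' Supp cs u)
    (heq : w * v = u * x) :
    ∀ n, u ∈ parab cs (Jseq n) :=
  mem_parab_Jn_general cs p δ hδ J Jseq wseq hJw w m hm x u v hx hu hsupp heq
end
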